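/- Let f be a partial height function defined on the boundary vertices of a finite simply-connected region R, admitting at least one extension, and let v be a vertex in the interior of R such that there is a lattice path of m vertices from the boundary of R to v. Then for all c > 0, the probability under μ_f that |H(v) − E[H(v)]| > c·√m is less than 2·e^{−c²/32}. -/

import Mathlib

/-- A cell: a lattice unit square, identified by its lower-left corner. -/
abbrev Cell : Type := ℤ × ℤ

/-- A lattice vertex of the square grid. -/
abbrev Vertex : Type := ℤ × ℤ

/-- The four cells having `v` as a corner. -/
def cellsAt (v : Vertex) : Finset Cell :=
  {(v.1 - 1, v.2 - 1), (v.1, v.2 - 1), (v.1 - 1, v.2), (v.1, v.2)}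

/-- `v` is a vertex of the region `R` (a corner of one of its cells). -/
def IsVertexOf (R : Finset Cell) (v : Vertex) : Prop := ∃ c ∈ cellsAt v, c ∈ R

/-- `v` is a vertex on the boundary of the region `R`. -/
def IsBoundaryVertexOf (R : Finset Cell) (v : Vertex) : Prop :=
  IsVertexOf R v ∧ ∃ c ∈ cellsAt v, c ∉ R

/-- Adjacency of lattice vertices. -/
def VAdj (u v : Vertex) : Prop :=
  v = (u.1 + 1, u.2) ∨ v = (u.1 - 1, u.2) ∨ v = (u.1, u.2 + 1) ∨ v = (u.1, u.2 - 1)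

/-- The cell lying on the left of the directed edge from `u` to `v`
(for adjacent vertices `u`, `v`). -/
def leftCell (u v : Vertex) : Cell :=
  if v = (u.1 + 1, u.2) then (u.1, u.2)
  else if v = (u.1 - 1, u.2) then (u.1 - 1, u.2 - 1)
  else if v = (u.1, u.2 + 1) then (u.1 - 1, u.2)
  else (u.1, u.2 - 1)

/-- The cell `c` is black, under the checkerboard coloring selected by the flag `bc`. -/
def IsBlack (bc : Bool) (c : Cell) : Prop := ((c.1 + c.2) % 2 = 0) ↔ bc = true

/-- The edge joining adjacent vertices `u` and `v` lies on the boundary of the region `R`,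
i.e. exactly one of the two cells bordering the edge belongs to `R`. -/
def IsBoundaryEdge (R : Finset Cell) (u v : Vertex) : Prop :=
  (leftCell u v ∈ R ∧ leftCell v u ∉ R) ∨ (leftCell u v ∉ R ∧ leftCell v u ∈ R)

/-- A (partial) height function on the set of vertices `V'` of the region `R`: an
integer-valued function such that for all adjacent vertices `u`, `v` of `V'`, if the edge
`uv` lies on the boundary of `R` then `|h u - h v| = 1`, and if the directed edge from `u`
to `v` has a black square of `R` on its left then `h v - h u ∈ {1, -3}`. -/
def IsPartialHeightFn (bc : Bool) (R : Finset Cell) (V' : Set Vertex) (h : Vertex → ℤ) : Prop :=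
  ∀ u v : Vertex, u ∈ V' → v ∈ V' → VAdj u v →
    (IsBoundaryEdge R u v → |h u - h v| = 1) ∧
    (leftCell u v ∈ R → IsBlack bc (leftCell u v) → h v - h u = 1 ∨ h v - h u = -3)

/-- The set of vertices of the region `R`. -/
def vertexSet (R : Finset Cell) : Set Vertex := {v | IsVertexOf R v}

/-- The set of boundary vertices of the region `R`. -/
def boundaryVertexSet (R : Finset Cell) : Set Vertex := {v | IsBoundaryVertexOf R v}

/-- A complete height function on the region `R` (normalized to vanish off the vertex set
of `R`, so that the collection of complete height functions is finite). -/
def IsCompleteHeightFn (bc : Bool) (R : Finset Cell) (h : Vertex → ℤ) : Prop :=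
  IsPartialHeightFn bc R (vertexSet R) h ∧ ∀ v, ¬IsVertexOf R v → h v = 0

/-- The set of complete height functions on `R` extending the partial height function `f`
defined on `V'`. -/
def Extensions (bc : Bool) (R : Finset Cell) (V' : Set Vertex) (f : Vertex → ℤ) :
    Set (Vertex → ℤ) :=
  {h | IsCompleteHeightFn bc R h ∧ ∀ v ∈ V', h v = f v}

/-- Edge-adjacency of cells (the two unit squares share a side). -/
def CellAdj (a b : Cell) : Prop :=
  (a.1 = b.1 ∧ |a.2 - b.2| = 1) ∨ (a.2 = b.2 ∧ |a.1 - b.1| = 1)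

/-- A set of cells is connected under edge-adjacency. -/
def EdgeConnected (S : Set Cell) : Prop :=
  ∀ a ∈ S, ∀ b ∈ S, Relation.ReflTransGen (fun x y => CellAdj x y ∧ y ∈ S) a b

/-- A finite simply-connected region: nonempty, connected, and with connected complement. -/
def IsSimplyConnectedRegion (R : Finset Cell) : Prop :=
  R.Nonempty ∧ EdgeConnected (R : Set Cell) ∧ EdgeConnected ((R : Set Cell)ᶜ)

/-- A set of vertices is connected as an induced subgraph of the grid. -/
def VConnected (V' : Set Vertex) : Prop :=
  ∀ u ∈ V', ∀ v ∈ V', Relation.ReflTransGen (fun a b => VAdj a b ∧ b ∈ V') u v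

/-- The uniform probability mass function on a (finite) set `S` of height functions. -/
noncomputable def uniformOn (S : Set (Vertex → ℤ)) : (Vertex → ℤ) → ℝ :=
  S.indicator fun _ => ((S.ncard : ℝ))⁻¹

/-- The expected value of `H(v)` when `H` is chosen uniformly at random from the (finite)
set `S` of height functions. -/
noncomputable def heightExp (S : Set (Vertex → ℤ)) (v : Vertex) : ℝ :=
  (∑ᶠ h ∈ S, ((h v : ℤ) : ℝ)) / (S.ncard : ℝ)

/-- The probability of the event `E` when a height function is chosen uniformly at random
from the (finite) set `S`. -/
noncomputable def probOn (S E : Set (Vertex → ℤ)) : ℝ := ((S ∩ E).ncard : ℝ) / (S.ncard : ℝ)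

/-! ### Auxiliary development -/

section Geometry

lemma mem_cellsAt_iff {v : Vertex} {c : Cell} : c ∈ cellsAt v ↔
    c = (v.1-1, v.2-1) ∨ c = (v.1, v.2-1) ∨ c = (v.1-1, v.2) ∨ c = (v.1, v.2) := by
  simp [cellsAt]

instance instDecIsVertexOf (R : Finset Cell) (v : Vertex) : Decidable (IsVertexOf R v) :=
  decidable_of_iff (∃ c ∈ cellsAt v, c ∈ R) Iff.rfl

lemma vadj_symm {u v : Vertex} (h : VAdj u v) : VAdj v u := by
  rcases h with h | h | h | h <;> subst h <;> simp [VAdj, Prod.ext_iff] <;> omega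

lemma leftCell_right {u v : Vertex} (h : v = (u.1+1, u.2)) : leftCell u v = (u.1, u.2) := by
  rw [leftCell, if_pos h]

lemma leftCell_left {u v : Vertex} (h : v = (u.1-1, u.2)) : leftCell u v = (u.1-1, u.2-1) := by
  rw [leftCell, if_neg (by rw [h]; simp [Prod.ext_iff]; try omega), if_pos h]

lemma leftCell_up {u v : Vertex} (h : v = (u.1, u.2+1)) : leftCell u v = (u.1-1, u.2) := by
  rw [leftCell, if_neg (by rw [h]; simp [Prod.ext_iff]; try omega),
    if_neg (by rw [h]; simp [Prod.ext_iff]; try omega), if_pos h]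

lemma leftCell_down {u v : Vertex} (h : v = (u.1, u.2-1)) : leftCell u v = (u.1, u.2-1) := by
  rw [leftCell, if_neg (by rw [h]; simp [Prod.ext_iff]; try omega),
    if_neg (by rw [h]; simp [Prod.ext_iff]; try omega),
    if_neg (by rw [h]; simp [Prod.ext_iff]; try omega)]

/-- Computation of the two cells adjacent to an edge, together with their membership
and opposite-parity facts. -/
lemma edge_cells {u v : Vertex} (h : VAdj u v) :
    leftCell u v ∈ cellsAt u ∧ leftCell u v ∈ cellsAt v ∧
    leftCell v u ∈ cellsAt u ∧ leftCell v u ∈ cellsAt v ∧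
    ((leftCell u v).1 + (leftCell u v).2 + ((leftCell v u).1 + (leftCell v u).2)) % 2 ≠ 0 := by
  rcases h with h | h | h | h
  · rw [leftCell_right h, leftCell_left (u := v) (by rw [h]; simp [Prod.ext_iff])]
    subst h
    refine ⟨?_, ?_, ?_, ?_, by simp; try omega⟩ <;> simp [mem_cellsAt_iff, Prod.ext_iff] <;> try omega
  · rw [leftCell_left h, leftCell_right (u := v) (by rw [h]; simp [Prod.ext_iff]; try omega)]
    subst h
    refine ⟨?_, ?_, ?_, ?_, by simp; try omega⟩ <;> simp [mem_cellsAt_iff, Prod.ext_iff] <;> try omega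
  · rw [leftCell_up h, leftCell_down (u := v) (by rw [h]; simp [Prod.ext_iff])]
    subst h
    refine ⟨?_, ?_, ?_, ?_, by simp; try omega⟩ <;> simp [mem_cellsAt_iff, Prod.ext_iff] <;> try omega
  · rw [leftCell_down h, leftCell_up (u := v) (by rw [h]; simp [Prod.ext_iff]; try omega)]
    subst h
    refine ⟨?_, ?_, ?_, ?_, by simp; try omega⟩ <;> simp [mem_cellsAt_iff, Prod.ext_iff] <;> try omega

lemma isBlack_opp {bc : Bool} {c c' : Cell} (h : (c.1 + c.2 + (c'.1 + c'.2)) % 2 ≠ 0) :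
    IsBlack bc c ↔ ¬ IsBlack bc c' := by
  cases bc <;> simp [IsBlack] <;> omega

end Geometry

section Edge
variable {bc : Bool} {R : Finset Cell}

lemma isBoundaryEdge_symm {u v : Vertex} (h : IsBoundaryEdge R u v) : IsBoundaryEdge R v u := by
  rcases h with ⟨a, b⟩ | ⟨a, b⟩
  · exact Or.inr ⟨b, a⟩
  · exact Or.inl ⟨b, a⟩

/-- Dichotomy for an edge between two vertices of `R`: either one of the two sides is a
black cell of `R`, or both endpoints are boundary vertices and no side is a black cell
of `R`. -/
lemma edge_geom (bc : Bool) {u v : Vertex} (hadj : VAdj u v)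
    (hu : IsVertexOf R u) (hv : IsVertexOf R v) :
    (leftCell u v ∈ R ∧ IsBlack bc (leftCell u v)) ∨
    (leftCell v u ∈ R ∧ IsBlack bc (leftCell v u)) ∨
    (IsBoundaryVertexOf R u ∧ IsBoundaryVertexOf R v ∧
      (leftCell u v ∈ R → ¬ IsBlack bc (leftCell u v)) ∧
      (leftCell v u ∈ R → ¬ IsBlack bc (leftCell v u))) := by
  obtain ⟨m1, m2, m3, m4, hpar⟩ := edge_cells hadj
  have hopp := isBlack_opp (bc := bc) hpar
  by_cases hb : IsBlack bc (leftCell u v)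
  · by_cases hr : leftCell u v ∈ R
    · exact Or.inl ⟨hr, hb⟩
    · exact Or.inr (Or.inr ⟨⟨hu, leftCell u v, m1, hr⟩, ⟨hv, leftCell u v, m2, hr⟩,
        fun h => absurd h hr, fun _ => hopp.mp hb⟩)
  · have hb' : IsBlack bc (leftCell v u) := by
      by_contra hb'
      exact hb (hopp.mpr hb')
    by_cases hr : leftCell v u ∈ R
    · exact Or.inr (Or.inl ⟨hr, hb'⟩)
    · exact Or.inr (Or.inr ⟨⟨hu, leftCell v u, m3, hr⟩, ⟨hv, leftCell v u, m4, hr⟩,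
        fun _ => hb, fun h => absurd h hr⟩)

lemma chf_black {h : Vertex → ℤ} (H : IsCompleteHeightFn bc R h) {u v : Vertex}
    (hu : IsVertexOf R u) (hv : IsVertexOf R v) (hadj : VAdj u v)
    (hr : leftCell u v ∈ R) (hb : IsBlack bc (leftCell u v)) :
    h v - h u = 1 ∨ h v - h u = -3 :=
  (H.1 u v hu hv hadj).2 hr hb

lemma chf_bdry {h : Vertex → ℤ} (H : IsCompleteHeightFn bc R h) {u v : Vertex}
    (hu : IsVertexOf R u) (hv : IsVertexOf R v) (hadj : VAdj u v)
    (he : IsBoundaryEdge R u v) : |h u - h v| = 1 :=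
  (H.1 u v hu hv hadj).1 he

lemma chf_forced {h : Vertex → ℤ} (H : IsCompleteHeightFn bc R h) {u v : Vertex}
    (hu : IsVertexOf R u) (hv : IsVertexOf R v) (hadj : VAdj u v)
    (hr : leftCell u v ∈ R) (hb : IsBlack bc (leftCell u v))
    (he : IsBoundaryEdge R u v) : h v - h u = 1 := by
  have h1 := chf_black H hu hv hadj hr hb
  have h2 := chf_bdry H hu hv hadj he
  rcases abs_cases (h u - h v) with ⟨e, _⟩ | ⟨e, _⟩ <;> omega

/-- Lattice property: `min` and `max` of two complete height functions that agree mod 4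
everywhere and are ordered on the boundary are again complete height functions. -/
lemma lat_min_max {h1 h2 : Vertex → ℤ}
    (H1 : IsCompleteHeightFn bc R h1) (H2 : IsCompleteHeightFn bc R h2)
    (hc : ∀ w, (h1 w - h2 w) % 4 = 0)
    (hbv : ∀ w, IsBoundaryVertexOf R w → h1 w ≤ h2 w) :
    IsCompleteHeightFn bc R (fun w => min (h1 w) (h2 w)) ∧
    IsCompleteHeightFn bc R (fun w => max (h1 w) (h2 w)) := by
  have key : ∀ u v : Vertex, u ∈ vertexSet R → v ∈ vertexSet R → VAdj u v →
      ((IsBoundaryEdge R u v → |min (h1 u) (h2 u) - min (h1 v) (h2 v)| = 1 ∧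
          |max (h1 u) (h2 u) - max (h1 v) (h2 v)| = 1) ∧
        (leftCell u v ∈ R → IsBlack bc (leftCell u v) →
          (min (h1 v) (h2 v) - min (h1 u) (h2 u) = 1 ∨
            min (h1 v) (h2 v) - min (h1 u) (h2 u) = -3) ∧
          (max (h1 v) (h2 v) - max (h1 u) (h2 u) = 1 ∨
            max (h1 v) (h2 v) - max (h1 u) (h2 u) = -3))) := by
    intro u v hu hv hadj
    have hu' : IsVertexOf R u := hu
    have hv' : IsVertexOf R v := hv
    constructor
    · intro he
      rcases edge_geom bc hadj hu' hv' with ⟨hr, hb⟩ | ⟨hr, hb⟩ | ⟨bu, bv, _, _⟩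
      · have f1 := chf_forced H1 hu' hv' hadj hr hb he
        have f2 := chf_forced H2 hu' hv' hadj hr hb he
        constructor <;> rw [abs_eq (by norm_num : (0:ℤ) ≤ 1)] <;> omega
      · have f1 := chf_forced H1 hv' hu' (vadj_symm hadj) hr hb (isBoundaryEdge_symm he)
        have f2 := chf_forced H2 hv' hu' (vadj_symm hadj) hr hb (isBoundaryEdge_symm he)
        constructor <;> rw [abs_eq (by norm_num : (0:ℤ) ≤ 1)] <;> omega
      · have l1 := hbv u bu
        have l2 := hbv v bv
        have f1 := chf_bdry H1 hu' hv' hadj he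
        have f2 := chf_bdry H2 hu' hv' hadj he
        rw [abs_eq (by norm_num : (0:ℤ) ≤ 1)] at f1 f2
        constructor <;> rw [abs_eq (by norm_num : (0:ℤ) ≤ 1)] <;> omega
    · intro hr hb
      have d1 := chf_black H1 hu' hv' hadj hr hb
      have d2 := chf_black H2 hu' hv' hadj hr hb
      have mu := hc u
      have mv := hc v
      constructor <;> omega
  refine ⟨⟨fun u v hu hv hadj => ?_, fun w hw => ?_⟩, ⟨fun u v hu hv hadj => ?_, fun w hw => ?_⟩⟩
  · exact ⟨fun he => ((key u v hu hv hadj).1 he).1, fun hr hb => ((key u v hu hv hadj).2 hr hb).1⟩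
  · simp only [H1.2 w hw, H2.2 w hw, min_self]
  · exact ⟨fun he => ((key u v hu hv hadj).1 he).2, fun hr hb => ((key u v hu hv hadj).2 hr hb).2⟩
  · simp only [H1.2 w hw, H2.2 w hw, max_self]

end Edge

section Conn
variable {bc : Bool} {R : Finset Cell} {f : Vertex → ℤ}

/-- One step to the left, with both cells adjacent to the crossed edge lying in `R`. -/
def StepL (R : Finset Cell) (a b : Vertex) : Prop :=
  b = (a.1 - 1, a.2) ∧ (a.1 - 1, a.2 - 1) ∈ R ∧ (a.1 - 1, a.2) ∈ R

lemma interior_cells {w : Vertex} (hw : IsVertexOf R w) (hnb : ¬ IsBoundaryVertexOf R w) :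
    ∀ c ∈ cellsAt w, c ∈ R := by
  intro c hc
  by_contra hcc
  exact hnb ⟨hw, c, hc, hcc⟩

lemma stepL_adj {a b : Vertex} (hs : StepL R a b) : VAdj a b := Or.inr (Or.inl hs.1)

lemma stepL_vertex {a b : Vertex} (hs : StepL R a b) : IsVertexOf R a ∧ IsVertexOf R b := by
  obtain ⟨hb, c1, c2⟩ := hs
  subst hb
  exact ⟨⟨(a.1-1, a.2), by simp [mem_cellsAt_iff], c2⟩,
    ⟨(a.1-1, a.2), by simp [mem_cellsAt_iff, Prod.ext_iff], c2⟩⟩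

lemma stepL_dir (bc : Bool) {a b : Vertex} (hs : StepL R a b) :
    (leftCell a b ∈ R ∧ IsBlack bc (leftCell a b)) ∨
    (leftCell b a ∈ R ∧ IsBlack bc (leftCell b a)) := by
  obtain ⟨hb, c1, c2⟩ := hs
  have hadj : VAdj a b := Or.inr (Or.inl hb)
  have e1 : leftCell a b = (a.1-1, a.2-1) := leftCell_left hb
  have e2 : leftCell b a = (a.1-1, a.2) := by
    have : a = (b.1 + 1, b.2) := by subst hb; simp [Prod.ext_iff]
    rw [leftCell_right this]
    subst hb; simp
  have hpar := (edge_cells hadj).2.2.2.2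
  have hopp := isBlack_opp (bc := bc) hpar
  by_cases hblack : IsBlack bc (leftCell a b)
  · exact Or.inl ⟨e1 ▸ c1, hblack⟩
  · refine Or.inr ⟨e2 ▸ c2, ?_⟩
    by_contra hb2
    exact hblack (hopp.mpr hb2)

lemma stepL_diff {h : Vertex → ℤ} (H : IsCompleteHeightFn bc R h) {a b : Vertex}
    (hs : StepL R a b) :
    (h b - h a = 1 ∨ h b - h a = -3) ∨ (h a - h b = 1 ∨ h a - h b = -3) := by
  obtain ⟨hva, hvb⟩ := stepL_vertex hs
  rcases stepL_dir bc hs with ⟨hr, hbl⟩ | ⟨hr, hbl⟩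
  · exact Or.inl (chf_black H hva hvb (stepL_adj hs) hr hbl)
  · exact Or.inr (chf_black H hvb hva (vadj_symm (stepL_adj hs)) hr hbl)

lemma stepL_mod4 {h1 h2 : Vertex → ℤ} (H1 : IsCompleteHeightFn bc R h1)
    (H2 : IsCompleteHeightFn bc R h2) {a b : Vertex} (hs : StepL R a b) :
    ((h1 a - h2 a) - (h1 b - h2 b)) % 4 = 0 := by
  obtain ⟨hva, hvb⟩ := stepL_vertex hs
  rcases stepL_dir bc hs with ⟨hr, hbl⟩ | ⟨hr, hbl⟩
  · have d1 := chf_black H1 hva hvb (stepL_adj hs) hr hbl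
    have d2 := chf_black H2 hva hvb (stepL_adj hs) hr hbl
    omega
  · have d1 := chf_black H1 hvb hva (vadj_symm (stepL_adj hs)) hr hbl
    have d2 := chf_black H2 hvb hva (vadj_symm (stepL_adj hs)) hr hbl
    omega

/-- Every vertex of `R` is connected to a boundary vertex by left-steps. -/
lemma conn (R : Finset Cell) : ∀ w : Vertex, IsVertexOf R w →
    ∃ u, IsBoundaryVertexOf R u ∧ Relation.ReflTransGen (StepL R) w u := by
  classical
  have main : ∀ n : ℕ, ∀ w : Vertex,
      (R.filter (fun c => (c.2 = w.2 - 1 ∨ c.2 = w.2) ∧ c.1 < w.1)).card ≤ n →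
      IsVertexOf R w →
      ∃ u, IsBoundaryVertexOf R u ∧ Relation.ReflTransGen (StepL R) w u := by
    intro n
    induction n with
    | zero =>
      intro w hcard hw
      by_cases hb : IsBoundaryVertexOf R w
      · exact ⟨w, hb, Relation.ReflTransGen.refl⟩
      · exfalso
        have c2 : (w.1 - 1, w.2) ∈ R :=
          interior_cells hw hb _ (by simp [mem_cellsAt_iff])
        have : (w.1 - 1, w.2) ∈ R.filter (fun c => (c.2 = w.2 - 1 ∨ c.2 = w.2) ∧ c.1 < w.1) := by
          simp [Finset.mem_filter, c2]
        have := Finset.card_pos.mpr ⟨_, this⟩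
        omega
    | succ n ih =>
      intro w hcard hw
      by_cases hb : IsBoundaryVertexOf R w
      · exact ⟨w, hb, Relation.ReflTransGen.refl⟩
      · have c1 : (w.1 - 1, w.2 - 1) ∈ R :=
          interior_cells hw hb _ (by simp [mem_cellsAt_iff])
        have c2 : (w.1 - 1, w.2) ∈ R :=
          interior_cells hw hb _ (by simp [mem_cellsAt_iff])
        have hstep : StepL R w (w.1 - 1, w.2) := ⟨rfl, c1, c2⟩
        have hw' : IsVertexOf R (w.1 - 1, w.2) := (stepL_vertex hstep).2
        have hsub : R.filter (fun c => (c.2 = (w.2:ℤ) - 1 ∨ c.2 = w.2) ∧ c.1 < w.1 - 1) ⊂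
            R.filter (fun c => (c.2 = w.2 - 1 ∨ c.2 = w.2) ∧ c.1 < w.1) := by
          refine Finset.ssubset_iff_of_subset ?_ |>.mpr ?_
          · intro c hc
            simp only [Finset.mem_filter] at hc ⊢
            exact ⟨hc.1, hc.2.1, by omega⟩
          · exact ⟨(w.1 - 1, w.2), by simp [Finset.mem_filter, c2], by simp⟩
        have hcard' : (R.filter (fun c => (c.2 = (w.2:ℤ) - 1 ∨ c.2 = w.2) ∧ c.1 < w.1 - 1)).card ≤ n := by
          have := Finset.card_lt_card hsub
          omega
        obtain ⟨u, hu, hpath⟩ := ih (w.1 - 1, w.2) (by simpa using hcard') hw'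
        exact ⟨u, hu, Relation.ReflTransGen.head hstep hpath⟩
  intro w hw
  exact main _ w le_rfl hw

end Conn

section Global
variable {bc : Bool} {R : Finset Cell} {f : Vertex → ℤ}

lemma ext_mem_iff {h : Vertex → ℤ} :
    h ∈ Extensions bc R (boundaryVertexSet R) f ↔
      IsCompleteHeightFn bc R h ∧ ∀ w, IsBoundaryVertexOf R w → h w = f w := Iff.rfl

/-- Any two extensions of `f` agree mod 4 everywhere. -/
lemma mod4_global {h1 h2 : Vertex → ℤ}
    (m1 : h1 ∈ Extensions bc R (boundaryVertexSet R) f)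
    (m2 : h2 ∈ Extensions bc R (boundaryVertexSet R) f) :
    ∀ w, (h1 w - h2 w) % 4 = 0 := by
  intro w
  by_cases hw : IsVertexOf R w
  · obtain ⟨u, hu, hpath⟩ := conn R w hw
    clear hw
    induction hpath using Relation.ReflTransGen.head_induction_on with
    | refl =>
      rw [m1.2 u hu, m2.2 u hu]
      simp
    | head hs _ ih =>
      have := stepL_mod4 (bc := bc) m1.1 m2.1 hs
      omega
  · rw [m1.1.2 w hw, m2.1.2 w hw]
    simp

/-- For each vertex, the set of possible values of extensions is finite. -/
lemma range_finite (bc : Bool) (R : Finset Cell) (f : Vertex → ℤ) (w : Vertex) :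
    ∃ K : Finset ℤ, ∀ h ∈ Extensions bc R (boundaryVertexSet R) f, h w ∈ K := by
  by_cases hw : IsVertexOf R w
  · obtain ⟨u, hu, hpath⟩ := conn R w hw
    clear hw
    induction hpath using Relation.ReflTransGen.head_induction_on with
    | refl =>
      exact ⟨{f u}, fun h hm => by simp [hm.2 u hu]⟩
    | @head a b hs _ ih =>
      obtain ⟨K, hK⟩ := ih
      refine ⟨K.biUnion (fun k => Finset.Icc (k - 3) (k + 3)), fun h hm => ?_⟩
      have hd := stepL_diff (bc := bc) hm.1 hs
      refine Finset.mem_biUnion.mpr ⟨h b, hK h hm, Finset.mem_Icc.mpr (by omega)⟩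
  · exact ⟨{0}, fun h hm => by simp [hm.1.2 w hw]⟩

/-- The finite set of vertices of `R`, as a `Finset`. -/
noncomputable def VSF (R : Finset Cell) : Finset Vertex :=
  R.biUnion (fun c => {(c.1, c.2), (c.1 + 1, c.2), (c.1, c.2 + 1), (c.1 + 1, c.2 + 1)})

lemma mem_VSF {R : Finset Cell} {w : Vertex} : w ∈ VSF R ↔ IsVertexOf R w := by
  simp only [VSF, Finset.mem_biUnion]
  constructor
  · rintro ⟨c, hc, hw⟩
    simp only [Finset.mem_insert, Finset.mem_singleton] at hw
    rcases hw with rfl | rfl | rfl | rfl <;>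
      exact ⟨c, by simp [mem_cellsAt_iff, Prod.ext_iff] <;> omega, hc⟩
  · rintro ⟨c, hc, hcR⟩
    refine ⟨c, hcR, ?_⟩
    rw [mem_cellsAt_iff] at hc
    simp only [Finset.mem_insert, Finset.mem_singleton]
    rcases hc with rfl | rfl | rfl | rfl <;> simp [Prod.ext_iff] <;> omega

lemma ext_finite (bc : Bool) (R : Finset Cell) (f : Vertex → ℤ) :
    (Extensions bc R (boundaryVertexSet R) f).Finite := by
  classical
  choose K hK using range_finite bc R f
  set S := Extensions bc R (boundaryVertexSet R) f with hS
  have hinj : Set.InjOn (fun (h : Vertex → ℤ) => fun w : {w // w ∈ VSF R} => h w.1) S := by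
    intro h1 hm1 h2 hm2 he
    funext w
    by_cases hw : w ∈ VSF R
    · exact congrFun he ⟨w, hw⟩
    · rw [hm1.1.2 w (fun hv => hw (mem_VSF.mpr hv)), hm2.1.2 w (fun hv => hw (mem_VSF.mpr hv))]
  have himage : ((fun (h : Vertex → ℤ) => fun w : {w // w ∈ VSF R} => h w.1) '' S) ⊆
      Set.pi Set.univ (fun w : {w // w ∈ VSF R} => (K w.1 : Set ℤ)) := by
    rintro g ⟨h, hm, rfl⟩ w _
    exact hK w.1 h hm
  have hfin : ((fun (h : Vertex → ℤ) => fun w : {w // w ∈ VSF R} => h w.1) '' S).Finite :=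
    Set.Finite.subset (Set.Finite.pi (fun w => (K w.1).finite_toSet)) himage
  exact Set.Finite.of_finite_image hfin hinj

end Global

section AvgMono
open scoped FinsetFamily

/-- Comparison of averages of a monotone function over two finite subsets of a
distributive lattice satisfying the exchange property (a consequence of the
Ahlswede–Daykin four functions theorem). -/
lemma avg_mono {α : Type*} [DistribLattice α] [DecidableEq α] (A B : Finset α) (z : α → ℝ) (hz : Monotone z)
    (hinf : ∀ a ∈ A, ∀ b ∈ B, a ⊓ b ∈ A) (hsup : ∀ a ∈ A, ∀ b ∈ B, a ⊔ b ∈ B) :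
    (∑ a ∈ A, z a) * B.card ≤ A.card * ∑ b ∈ B, z b := by
  classical
  rcases A.eq_empty_or_nonempty with rfl | hA
  · simp
  rcases B.eq_empty_or_nonempty with rfl | hB
  · simp
  have hABne : (A ∪ B).Nonempty := hA.mono Finset.subset_union_left
  obtain ⟨M, hM⟩ : ∃ M : ℝ, ∀ c ∈ A ∪ B, 0 ≤ z c + M := by
    refine ⟨(A ∪ B).sup' hABne (fun c => -z c), fun c hc => ?_⟩
    have := Finset.le_sup' (fun c => -z c) hc
    linarith
  set z' : α → ℝ := fun c => max (z c + M) 0 with hz'def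
  have hz'mono : Monotone z' := fun a b hab => max_le_max (by linarith [hz hab]) le_rfl
  have hz'nonneg : ∀ c, 0 ≤ z' c := fun c => le_max_right _ _
  have hz'eq : ∀ c ∈ A ∪ B, z' c = z c + M := fun c hc => max_eq_left (hM c hc)
  set F1 : α → ℝ := fun a => if a ∈ A then z' a else 0 with hF1
  set F2 : α → ℝ := fun b => if b ∈ B then 1 else 0 with hF2
  set F3 : α → ℝ := fun c => if c ∈ A then 1 else 0 with hF3
  set F4 : α → ℝ := fun d => if d ∈ B then z' d else 0 with hF4
  have h4 := four_functions_theorem F1 F2 F3 F4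
    (fun a => by simp only [hF1]; split <;> simp [hz'nonneg])
    (fun a => by simp only [hF2]; split <;> norm_num)
    (fun a => by simp only [hF3]; split <;> norm_num)
    (fun a => by simp only [hF4]; split <;> simp [hz'nonneg])
    (fun a b => by
      by_cases ha : a ∈ A
      · by_cases hb : b ∈ B
        · simp only [hF1, hF2, hF3, hF4, if_pos ha, if_pos hb, if_pos (hinf a ha b hb),
            if_pos (hsup a ha b hb), one_mul, mul_one]
          exact hz'mono le_sup_left
        · simp only [hF1, hF2, if_neg hb, mul_zero]
          positivity
      · simp only [hF1, if_neg ha, zero_mul]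
        positivity) A B
  have e1 : ∑ a ∈ A, F1 a = ∑ a ∈ A, z' a :=
    Finset.sum_congr rfl (fun a ha => by simp [hF1, ha])
  have e2 : ∑ b ∈ B, F2 b = (B.card : ℝ) := by
    rw [Finset.sum_congr rfl (fun b hb => by simp [hF2, hb] : ∀ b ∈ B, F2 b = 1)]
    simp
  have hIsub : A ⊼ B ⊆ A := by
    intro c hc
    obtain ⟨a, ha, b, hb, rfl⟩ := Finset.mem_infs.mp hc
    exact hinf a ha b hb
  have hSsub : A ⊻ B ⊆ B := by
    intro c hc
    obtain ⟨a, ha, b, hb, rfl⟩ := Finset.mem_sups.mp hc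
    exact hsup a ha b hb
  have e3 : ∑ c ∈ A ⊼ B, F3 c ≤ (A.card : ℝ) := by
    calc ∑ c ∈ A ⊼ B, F3 c ≤ ∑ c ∈ A ⊼ B, 1 := by
          refine Finset.sum_le_sum (fun c _ => ?_)
          simp only [hF3]; split <;> norm_num
      _ = ((A ⊼ B).card : ℝ) := by simp
      _ ≤ (A.card : ℝ) := by exact_mod_cast Finset.card_le_card hIsub
  have e4 : ∑ d ∈ A ⊻ B, F4 d ≤ ∑ b ∈ B, z' b := by
    calc ∑ d ∈ A ⊻ B, F4 d ≤ ∑ d ∈ A ⊻ B, z' d := by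
          refine Finset.sum_le_sum (fun d _ => ?_)
          simp only [hF4]; split <;> simp [hz'nonneg]
      _ ≤ ∑ b ∈ B, z' b :=
          Finset.sum_le_sum_of_subset_of_nonneg hSsub (fun b _ _ => hz'nonneg b)
  have key : (∑ a ∈ A, z' a) * (B.card : ℝ) ≤ (A.card : ℝ) * ∑ b ∈ B, z' b := by
    rw [← e1, ← e2]
    calc (∑ a ∈ A, F1 a) * ∑ b ∈ B, F2 b ≤ (∑ c ∈ A ⊼ B, F3 c) * ∑ d ∈ A ⊻ B, F4 d := h4
      _ ≤ (A.card : ℝ) * ∑ b ∈ B, z' b := by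
          refine mul_le_mul e3 e4 ?_ ?_
          · refine Finset.sum_nonneg (fun d _ => ?_)
            simp only [hF4]; split <;> simp [hz'nonneg]
          · positivity
  have eA : ∑ a ∈ A, z' a = (∑ a ∈ A, z a) + A.card * M := by
    rw [Finset.sum_congr rfl (fun a ha => hz'eq a (Finset.mem_union_left _ ha)),
      Finset.sum_add_distrib]
    simp [mul_comm]
  have eB : ∑ b ∈ B, z' b = (∑ b ∈ B, z b) + B.card * M := by
    rw [Finset.sum_congr rfl (fun b hb => hz'eq b (Finset.mem_union_right _ hb)),
      Finset.sum_add_distrib]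
    simp [mul_comm]
  rw [eA, eB] at key
  nlinarith [key]

end AvgMono

section Holley
variable {bc : Bool} {R : Finset Cell} {f : Vertex → ℤ}

lemma shift_chf (t : ℤ) {h : Vertex → ℤ} (H : IsCompleteHeightFn bc R h) :
    IsCompleteHeightFn bc R (fun w => h w + (if IsVertexOf R w then t else 0)) := by
  classical
  constructor
  · intro u v hu hv hadj
    have hu' : IsVertexOf R u := hu
    have hv' : IsVertexOf R v := hv
    have H1 := H.1 u v hu hv hadj
    refine ⟨fun he => ?_, fun hr hb => ?_⟩
    · have h1 := H1.1 he
      show |(h u + if IsVertexOf R u then t else 0) - (h v + if IsVertexOf R v then t else 0)| = 1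
      rw [if_pos hu', if_pos hv', show h u + t - (h v + t) = h u - h v by ring]
      exact h1
    · have h1 := H1.2 hr hb
      show (h v + if IsVertexOf R v then t else 0) - (h u + if IsVertexOf R u then t else 0) = 1 ∨
        (h v + if IsVertexOf R v then t else 0) - (h u + if IsVertexOf R u then t else 0) = -3
      rw [if_pos hu', if_pos hv']
      omega
  · intro w hw
    simp [if_neg hw, H.2 w hw]

/-- The extensions of `f`, as a `Finset`. -/
noncomputable def SF (bc : Bool) (R : Finset Cell) (f : Vertex → ℤ) : Finset (Vertex → ℤ) :=
  (ext_finite bc R f).toFinset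

lemma mem_SF {h : Vertex → ℤ} :
    h ∈ SF bc R f ↔ h ∈ Extensions bc R (boundaryVertexSet R) f :=
  Set.Finite.mem_toFinset _

/-- The two conditional averages at values `β` and `β + 4` differ by at most 4,
via the Holley-type exchange argument. -/
lemma holley_mean (v w : Vertex) (hv : IsVertexOf R v) (hw : IsVertexOf R w)
    (k : ℕ) (x : ℕ → Vertex) (hxV : ∀ j, j ≤ k → IsVertexOf R (x j)) (a : ℕ → ℤ) (β : ℤ)
    (B1 B2 : Finset (Vertex → ℤ))
    (hB1 : ∀ h, h ∈ B1 ↔ h ∈ Extensions bc R (boundaryVertexSet R) f ∧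
      (∀ j ≤ k, h (x j) = a j) ∧ h w = β)
    (hB2 : ∀ h, h ∈ B2 ↔ h ∈ Extensions bc R (boundaryVertexSet R) f ∧
      (∀ j ≤ k, h (x j) = a j) ∧ h w = β + 4) :
    (∑ h ∈ B1, ((h v : ℤ) : ℝ)) * B2.card ≤ B1.card * ∑ h ∈ B2, ((h v : ℤ) : ℝ) ∧
    (∑ h ∈ B2, ((h v : ℤ) : ℝ)) * B1.card ≤
      B2.card * ((∑ h ∈ B1, ((h v : ℤ) : ℝ)) + 4 * B1.card) := by
  classical
  set z : (Vertex → ℤ) → ℝ := fun h => ((h v : ℤ) : ℝ) with hzdef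
  have hzmono : Monotone z := fun p q hpq => Int.cast_le.mpr (hpq v)
  have hmm : ∀ p q : Vertex → ℤ,
      p ∈ Extensions bc R (boundaryVertexSet R) f →
      q ∈ Extensions bc R (boundaryVertexSet R) f →
      (p ⊓ q) ∈ Extensions bc R (boundaryVertexSet R) f ∧
      (p ⊔ q) ∈ Extensions bc R (boundaryVertexSet R) f := by
    intro p q hp hq
    have hc := mod4_global hp hq
    have hbv : ∀ w', IsBoundaryVertexOf R w' → p w' ≤ q w' := fun w' hw' =>
      le_of_eq ((hp.2 w' hw').trans (hq.2 w' hw').symm)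
    obtain ⟨Hmin, Hmax⟩ := lat_min_max hp.1 hq.1 hc hbv
    have einf : p ⊓ q = fun w' => min (p w') (q w') := rfl
    have esup : p ⊔ q = fun w' => max (p w') (q w') := rfl
    constructor
    · refine ⟨einf ▸ Hmin, fun w' hw' => ?_⟩
      show min (p w') (q w') = f w'
      rw [hp.2 w' hw', hq.2 w' hw', min_self]
    · refine ⟨esup ▸ Hmax, fun w' hw' => ?_⟩
      show max (p w') (q w') = f w'
      rw [hp.2 w' hw', hq.2 w' hw', max_self]
  constructor
  · -- first inequality : plain exchange
    refine avg_mono B1 B2 z hzmono ?_ ?_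
    · intro p hp q hq
      rw [hB1] at hp ⊢
      rw [hB2] at hq
      refine ⟨(hmm p q hp.1 hq.1).1, fun j hj => ?_, ?_⟩
      · show min (p (x j)) (q (x j)) = a j
        rw [hp.2.1 j hj, hq.2.1 j hj, min_self]
      · show min (p w) (q w) = β
        rw [hp.2.2, hq.2.2]
        omega
    · intro p hp q hq
      rw [hB1] at hp
      rw [hB2] at hq ⊢
      refine ⟨(hmm p q hp.1 hq.1).2, fun j hj => ?_, ?_⟩
      · show max (p (x j)) (q (x j)) = a j
        rw [hp.2.1 j hj, hq.2.1 j hj, max_self]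
      · show max (p w) (q w) = β + 4
        rw [hp.2.2, hq.2.2]
        omega
  · -- second inequality : shifted exchange
    set σ : Vertex → ℤ := fun w' => if IsVertexOf R w' then (4:ℤ) else 0 with hσdef
    have hinj : Function.Injective (fun p : Vertex → ℤ => p + σ) := fun p q hpq => by
      funext w'
      have := congrFun hpq w'
      simpa using this
    set B1p : Finset (Vertex → ℤ) := B1.image (fun p => p + σ) with hB1p
    have hmem_shift : ∀ p, p ∈ Extensions bc R (boundaryVertexSet R) f →
        IsCompleteHeightFn bc R (p + σ) := by
      intro p hp
      exact shift_chf (bc := bc) (R := R) (4 : ℤ) hp.1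
    -- exchange for (B2, B1p)
    have key := avg_mono B2 B1p z hzmono ?_ ?_
    · -- conclude
      have hcard : B1p.card = B1.card := Finset.card_image_of_injective _ hinj
      have hsum : ∑ h ∈ B1p, z h = (∑ h ∈ B1, z h) + 4 * B1.card := by
        rw [hB1p, Finset.sum_image (fun p _ q _ h => hinj h)]
        have : ∀ p ∈ B1, z (p + σ) = z p + 4 := by
          intro p _
          show ((p v + σ v : ℤ) : ℝ) = ((p v : ℤ) : ℝ) + 4
          simp only [hσdef, if_pos hv]
          push_cast
          ring
        rw [Finset.sum_congr rfl this, Finset.sum_add_distrib]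
        simp [mul_comm]
      rw [hcard, hsum] at key
      exact key
    · -- inf condition
      intro q hq r hr
      rw [hB2] at hq ⊢
      rw [hB1p, Finset.mem_image] at hr
      obtain ⟨p, hp, rfl⟩ := hr
      rw [hB1] at hp
      have Hq := hq.1
      have Hp := hp.1
      have Hpσ : IsCompleteHeightFn bc R (p + σ) := hmem_shift p Hp
      have hc : ∀ w', (q w' - (p + σ) w') % 4 = 0 := by
        intro w'
        have h4 := mod4_global Hq Hp w'
        show (q w' - (p w' + σ w')) % 4 = 0
        simp only [hσdef]
        by_cases hw' : IsVertexOf R w'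
        · simp only [if_pos hw']; omega
        · simp only [if_neg hw']; omega
      have hbv : ∀ w', IsBoundaryVertexOf R w' → q w' ≤ (p + σ) w' := by
        intro w' hw'
        show q w' ≤ p w' + σ w'
        simp only [hσdef, if_pos hw'.1]
        rw [Hq.2 w' hw', Hp.2 w' hw']
        omega
      obtain ⟨Hmin, _⟩ := lat_min_max Hq.1 Hpσ hc hbv
      refine ⟨⟨Hmin, fun w' hw' => ?_⟩, fun j hj => ?_, ?_⟩
      · show min (q w') ((p + σ) w') = f w'
        have : (p + σ) w' = p w' + σ w' := rfl
        rw [this]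
        simp only [hσdef, if_pos hw'.1]
        rw [Hq.2 w' hw', Hp.2 w' hw']
        omega
      · show min (q (x j)) ((p + σ) (x j)) = a j
        have : (p + σ) (x j) = p (x j) + σ (x j) := rfl
        rw [this]
        simp only [hσdef, if_pos (hxV j hj)]
        rw [hq.2.1 j hj, hp.2.1 j hj]
        omega
      · show min (q w) ((p + σ) w) = β + 4
        have : (p + σ) w = p w + σ w := rfl
        rw [this]
        simp only [hσdef, if_pos hw]
        rw [hq.2.2, hp.2.2]
        omega
    · -- sup condition
      intro q hq r hr
      rw [hB2] at hq
      rw [hB1p, Finset.mem_image] at hr ⊢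
      obtain ⟨p, hp, rfl⟩ := hr
      rw [hB1] at hp
      have Hq := hq.1
      have Hp := hp.1
      set q' : Vertex → ℤ := fun w' => q w' + (if IsVertexOf R w' then (-4:ℤ) else 0) with hq'def
      have Hq' : IsCompleteHeightFn bc R q' := shift_chf (bc := bc) (R := R) (-4 : ℤ) Hq.1
      have hc : ∀ w', (q' w' - p w') % 4 = 0 := by
        intro w'
        have h4 := mod4_global Hq Hp w'
        simp only [hq'def]
        by_cases hw' : IsVertexOf R w'
        · simp only [if_pos hw']; omega
        · simp only [if_neg hw']; omega
      have hbv : ∀ w', IsBoundaryVertexOf R w' → q' w' ≤ p w' := by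
        intro w' hw'
        simp only [hq'def, if_pos hw'.1]
        rw [Hq.2 w' hw', Hp.2 w' hw']
        omega
      obtain ⟨_, Hmax⟩ := lat_min_max Hq' Hp.1 hc hbv
      refine ⟨q' ⊔ p, ?_, ?_⟩
      · rw [hB1]
        refine ⟨⟨Hmax, fun w' hw' => ?_⟩, fun j hj => ?_, ?_⟩
        · show max (q' w') (p w') = f w'
          simp only [hq'def, if_pos hw'.1]
          rw [Hq.2 w' hw', Hp.2 w' hw']
          omega
        · show max (q' (x j)) (p (x j)) = a j
          simp only [hq'def, if_pos (hxV j hj)]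
          rw [hq.2.1 j hj, hp.2.1 j hj]
          omega
        · show max (q' w) (p w) = β
          simp only [hq'def, if_pos hw]
          rw [hq.2.2, hp.2.2]
          omega
      · funext w'
        show max (q' w') (p w') + σ w' = max (q w') (p w' + σ w')
        simp only [hq'def, hσdef]
        by_cases hw' : IsVertexOf R w'
        · simp only [if_pos hw']; omega
        · simp only [if_neg hw']; omega

end Holley

section Fiber

/-- Summing fiberwise averages gives the total sum. -/
lemma sum_fiber_avg {α β : Type*} [DecidableEq β] (C : Finset α) (κ : α → β) (z : α → ℝ) :
    ∑ h ∈ C, (∑ h' ∈ C.filter (fun h' => κ h' = κ h), z h') /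
      (C.filter (fun h' => κ h' = κ h)).card = ∑ h ∈ C, z h := by
  classical
  set F : β → ℝ := fun b => (∑ h' ∈ C.filter (fun h' => κ h' = b), z h') /
    (C.filter (fun h' => κ h' = b)).card with hF
  have maps : ∀ h ∈ C, κ h ∈ C.image κ := fun h hh => Finset.mem_image_of_mem κ hh
  have e1 : ∑ h ∈ C, F (κ h) = ∑ b ∈ C.image κ, ∑ h ∈ C.filter (fun h => κ h = b), F (κ h) :=
    (Finset.sum_fiberwise_of_maps_to maps _).symm
  have e2 : ∑ h ∈ C, z h = ∑ b ∈ C.image κ, ∑ h ∈ C.filter (fun h => κ h = b), z h :=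
    (Finset.sum_fiberwise_of_maps_to maps _).symm
  show ∑ h ∈ C, F (κ h) = ∑ h ∈ C, z h
  calc ∑ h ∈ C, F (κ h) = ∑ b ∈ C.image κ, ∑ h ∈ C.filter (fun h => κ h = b), F (κ h) := e1
    _ = ∑ b ∈ C.image κ, ∑ h ∈ C.filter (fun h => κ h = b), z h := by
        refine Finset.sum_congr rfl (fun b hb => ?_)
        obtain ⟨h₀, hh₀, rfl⟩ := Finset.mem_image.mp hb
        have hne : (C.filter (fun h => κ h = κ h₀)).Nonempty :=
          ⟨h₀, Finset.mem_filter.mpr ⟨hh₀, rfl⟩⟩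
        have hcard : ((C.filter (fun h => κ h = κ h₀)).card : ℝ) ≠ 0 := by
          exact_mod_cast Finset.card_ne_zero_of_mem hne.choose_spec
        have hval : ∀ h ∈ C.filter (fun h => κ h = κ h₀), F (κ h) = F (κ h₀) := by
          intro h hh
          rw [(Finset.mem_filter.mp hh).2]
        rw [Finset.sum_congr rfl hval, Finset.sum_const, nsmul_eq_mul, hF]
        field_simp
    _ = ∑ h ∈ C, z h := e2.symm

/-- Convexity bound: for `|s| ≤ c`, `exp s ≤ cosh c + (s/c)·sinh c`. -/
lemma exp_le_cosh_add {s c : ℝ} (hc : 0 < c) (hs : |s| ≤ c) :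
    Real.exp s ≤ Real.cosh c + (s / c) * Real.sinh c := by
  rw [abs_le] at hs
  have ha : 0 ≤ (c + s) / (2 * c) := div_nonneg (by linarith) (by linarith)
  have hb : 0 ≤ (c - s) / (2 * c) := div_nonneg (by linarith) (by linarith)
  have hab : (c + s) / (2 * c) + (c - s) / (2 * c) = 1 := by
    field_simp
    ring
  have hconv := convexOn_exp.2 (Set.mem_univ c) (Set.mem_univ (-c)) ha hb hab
  have harg : (c + s) / (2 * c) * c + (c - s) / (2 * c) * (-c) = s := by
    field_simp
    ring
  simp only [smul_eq_mul] at hconv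
  rw [harg] at hconv
  calc Real.exp s ≤ (c + s) / (2 * c) * Real.exp c + (c - s) / (2 * c) * Real.exp (-c) := hconv
    _ = Real.cosh c + (s / c) * Real.sinh c := by
        rw [Real.cosh_eq, Real.sinh_eq]
        field_simp
        ring

end Fiber

section Martingale
variable {bc : Bool} {R : Finset Cell} {f : Vertex → ℤ}

/-- The record of values along the first `i+1` vertices of the path. -/
def kap (x : ℕ → Vertex) (i : ℕ) (h : Vertex → ℤ) : ℕ → ℤ :=
  fun j => if j ≤ i then h (x j) else 0

lemma kap_eq_iff {x : ℕ → Vertex} {i : ℕ} {h h' : Vertex → ℤ} :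
    kap x i h' = kap x i h ↔ ∀ j ≤ i, h' (x j) = h (x j) := by
  constructor
  · intro e j hj
    have := congrFun e j
    simpa [kap, if_pos hj] using this
  · intro e
    funext j
    by_cases hj : j ≤ i
    · simp [kap, hj, e j hj]
    · simp [kap, hj]

/-- The class of extensions agreeing with `h` along the first `i+1` path vertices. -/
noncomputable def cls (bc : Bool) (R : Finset Cell) (f : Vertex → ℤ) (x : ℕ → Vertex)
    (i : ℕ) (h : Vertex → ℤ) : Finset (Vertex → ℤ) := by
  classical exact (SF bc R f).filter (fun h' => kap x i h' = kap x i h)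

lemma mem_cls {x : ℕ → Vertex} {i : ℕ} {h h' : Vertex → ℤ} :
    h' ∈ cls bc R f x i h ↔ h' ∈ Extensions bc R (boundaryVertexSet R) f ∧
      ∀ j ≤ i, h' (x j) = h (x j) := by
  rw [cls]
  simp only [Finset.mem_filter, mem_SF, kap_eq_iff]

lemma mem_cls_self {x : ℕ → Vertex} {i : ℕ} {h : Vertex → ℤ}
    (hh : h ∈ Extensions bc R (boundaryVertexSet R) f) : h ∈ cls bc R f x i h :=
  mem_cls.mpr ⟨hh, fun _ _ => rfl⟩

lemma cls_congr {x : ℕ → Vertex} {i : ℕ} {h h' : Vertex → ℤ}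
    (hh' : h' ∈ cls bc R f x i h) : cls bc R f x i h' = cls bc R f x i h := by
  obtain ⟨he', ag'⟩ := mem_cls.mp hh'
  ext h''
  simp only [mem_cls]
  constructor
  · rintro ⟨e, ag⟩
    exact ⟨e, fun j hj => (ag j hj).trans (ag' j hj)⟩
  · rintro ⟨e, ag⟩
    exact ⟨e, fun j hj => (ag j hj).trans (ag' j hj).symm⟩

lemma cls_succ_eq {x : ℕ → Vertex} {i : ℕ} {h h' : Vertex → ℤ}
    (hh' : h' ∈ cls bc R f x i h) [DecidableEq ℤ] :
    cls bc R f x (i+1) h' =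
      (cls bc R f x i h).filter (fun h'' => h'' (x (i+1)) = h' (x (i+1))) := by
  obtain ⟨he', ag'⟩ := mem_cls.mp hh'
  ext h''
  simp only [mem_cls, Finset.mem_filter]
  constructor
  · rintro ⟨e, ag⟩
    exact ⟨⟨e, fun j hj => (ag j (by omega)).trans (ag' j hj)⟩, ag (i+1) le_rfl⟩
  · rintro ⟨⟨e, agi⟩, aw⟩
    refine ⟨e, fun j hj => ?_⟩
    by_cases hj' : j ≤ i
    · exact (agi j hj').trans (ag' j hj').symm
    · have hje : j = i + 1 := by omega
      rw [hje]
      exact aw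

/-- The conditional average of the height at `v` given the values along the path
up to index `i`. -/
noncomputable def gee (bc : Bool) (R : Finset Cell) (f : Vertex → ℤ) (x : ℕ → Vertex)
    (v : Vertex) (i : ℕ) (h : Vertex → ℤ) : ℝ :=
  (∑ h' ∈ cls bc R f x i h, ((h' v : ℤ) : ℝ)) / (cls bc R f x i h).card

lemma gee_congr {x : ℕ → Vertex} {v : Vertex} {i : ℕ} {h h' : Vertex → ℤ}
    (hh' : h' ∈ cls bc R f x i h) :
    gee bc R f x v i h' = gee bc R f x v i h := by
  rw [gee, gee, cls_congr hh']

lemma sum_gee_succ {x : ℕ → Vertex} {v : Vertex} {i : ℕ} {h : Vertex → ℤ} :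
    ∑ h' ∈ cls bc R f x i h, gee bc R f x v (i+1) h' =
      ∑ h' ∈ cls bc R f x i h, ((h' v : ℤ) : ℝ) := by
  classical
  have e := sum_fiber_avg (cls bc R f x i h) (fun h' => h' (x (i+1)))
    (fun h' => ((h' v : ℤ) : ℝ))
  rw [← e]
  refine Finset.sum_congr rfl (fun h' hh' => ?_)
  rw [gee, cls_succ_eq hh']

end Martingale

section StepBound
variable {bc : Bool} {R : Finset Cell} {f : Vertex → ℤ}

/-- The martingale increments are bounded by 4. -/
lemma step_bound (v : Vertex) (hv : IsVertexOf R v) (m : ℕ) (x : ℕ → Vertex)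
    (hxadj : ∀ i, i + 1 < m → VAdj (x i) (x (i + 1)))
    (hxmem : ∀ i, i < m → IsVertexOf R (x i))
    (i : ℕ) (hi : i + 1 < m) (h : Vertex → ℤ)
    (hh : h ∈ Extensions bc R (boundaryVertexSet R) f) :
    |gee bc R f x v (i+1) h - gee bc R f x v i h| ≤ 4 := by
  classical
  have hadj := hxadj i hi
  have hu : IsVertexOf R (x i) := hxmem i (by omega)
  have hw : IsVertexOf R (x (i+1)) := hxmem (i+1) hi
  -- two possible values at x (i+1)
  obtain ⟨β, hβ⟩ : ∃ β : ℤ, ∀ h' ∈ cls bc R f x i h,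
      h' (x (i+1)) = β ∨ h' (x (i+1)) = β + 4 := by
    rcases edge_geom bc hadj hu hw with ⟨hr, hb⟩ | ⟨hr, hb⟩ | ⟨_, hbv, _, _⟩
    · refine ⟨h (x i) - 3, fun h' hh' => ?_⟩
      obtain ⟨he, ag⟩ := mem_cls.mp hh'
      have hd := chf_black he.1 hu hw hadj hr hb
      have ha := ag i le_rfl
      omega
    · refine ⟨h (x i) - 1, fun h' hh' => ?_⟩
      obtain ⟨he, ag⟩ := mem_cls.mp hh'
      have hd := chf_black he.1 hw hu (vadj_symm hadj) hr hb
      have ha := ag i le_rfl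
      omega
    · exact ⟨f (x (i+1)), fun h' hh' => Or.inl ((mem_cls.mp hh').1.2 _ hbv)⟩
  set C := cls bc R f x i h with hC
  set B1 := C.filter (fun h' => h' (x (i+1)) = β) with hB1def
  set B2 := C.filter (fun h' => h' (x (i+1)) = β + 4) with hB2def
  have hB2alt : C.filter (fun h' => ¬ h' (x (i+1)) = β) = B2 := by
    ext h'
    simp only [Finset.mem_filter, hB2def]
    constructor
    · rintro ⟨hc, hne⟩
      rcases hβ h' hc with hval | hval
      · exact absurd hval hne
      · exact ⟨hc, hval⟩
    · rintro ⟨hc, hval⟩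
      exact ⟨hc, by omega⟩
  have hsum : ∀ z : (Vertex → ℤ) → ℝ, ∑ h' ∈ C, z h' = ∑ h' ∈ B1, z h' + ∑ h' ∈ B2, z h' := by
    intro z
    rw [← Finset.sum_filter_add_sum_filter_not C (fun h' => h' (x (i+1)) = β) z, hB2alt]
  have hcards : B1.card + B2.card = C.card := by
    rw [← hB2alt, hB1def]
    exact Finset.card_filter_add_card_filter_not _
  -- Holley comparison
  have hB1c : ∀ h', h' ∈ B1 ↔ h' ∈ Extensions bc R (boundaryVertexSet R) f ∧
      (∀ j ≤ i, h' (x j) = h (x j)) ∧ h' (x (i+1)) = β := by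
    intro h'
    rw [hB1def, Finset.mem_filter, hC, mem_cls, and_assoc]
  have hB2c : ∀ h', h' ∈ B2 ↔ h' ∈ Extensions bc R (boundaryVertexSet R) f ∧
      (∀ j ≤ i, h' (x j) = h (x j)) ∧ h' (x (i+1)) = β + 4 := by
    intro h'
    rw [hB2def, Finset.mem_filter, hC, mem_cls, and_assoc]
  obtain ⟨H1, H2⟩ := holley_mean v (x (i+1)) hv hw i x (fun j hj => hxmem j (by omega))
    (fun j => h (x j)) β B1 B2 hB1c hB2c
  set z : (Vertex → ℤ) → ℝ := fun h' => ((h' v : ℤ) : ℝ) with hz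
  set s1 := ∑ h' ∈ B1, z h' with hs1
  set s2 := ∑ h' ∈ B2, z h' with hs2
  set n1 := (B1.card : ℝ) with hn1
  set n2 := (B2.card : ℝ) with hn2
  have hn1nn : 0 ≤ n1 := Nat.cast_nonneg _
  have hn2nn : 0 ≤ n2 := Nat.cast_nonneg _
  have hself : h ∈ C := mem_cls_self hh
  have hCcard : (0:ℝ) < n1 + n2 := by
    have : 0 < C.card := Finset.card_pos.mpr ⟨h, hself⟩
    rw [hn1, hn2]
    exact_mod_cast hcards ▸ this
  have hgi : gee bc R f x v i h = (s1 + s2) / (n1 + n2) := by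
    rw [gee, ← hC, hsum z, hs1, hs2, hn1, hn2]
    push_cast [← hcards]
    ring_nf
  rcases hβ h hself with hval | hval
  · -- h ∈ B1
    have hmem1 : h ∈ B1 := Finset.mem_filter.mpr ⟨hself, hval⟩
    have hn1pos : (0:ℝ) < n1 := by
      rw [hn1]
      exact_mod_cast Finset.card_pos.mpr ⟨h, hmem1⟩
    have hgs : gee bc R f x v (i+1) h = s1 / n1 := by
      rw [gee, cls_succ_eq hself, ← hC]
      have : C.filter (fun h'' => h'' (x (i+1)) = h (x (i+1))) = B1 := by
        rw [hB1def, hval]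
      rw [this]
    rw [hgs, hgi, abs_le]
    have hne1 : n1 ≠ 0 := ne_of_gt hn1pos
    have hne12 : n1 + n2 ≠ 0 := ne_of_gt hCcard
    constructor
    · rw [div_sub_div _ _ hne1 hne12, le_div_iff₀ (mul_pos hn1pos hCcard)]
      nlinarith [H2, hn2nn, hn1pos]
    · rw [div_sub_div _ _ hne1 hne12, div_le_iff₀ (mul_pos hn1pos hCcard)]
      nlinarith [H1, hn2nn, hn1pos]
  · -- h ∈ B2
    have hmem2 : h ∈ B2 := Finset.mem_filter.mpr ⟨hself, hval⟩
    have hn2pos : (0:ℝ) < n2 := by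
      rw [hn2]
      exact_mod_cast Finset.card_pos.mpr ⟨h, hmem2⟩
    have hgs : gee bc R f x v (i+1) h = s2 / n2 := by
      rw [gee, cls_succ_eq hself, ← hC]
      have : C.filter (fun h'' => h'' (x (i+1)) = h (x (i+1))) = B2 := by
        rw [hB2def, hval]
      rw [this]
    rw [hgs, hgi, abs_le]
    have hne2 : n2 ≠ 0 := ne_of_gt hn2pos
    have hne12 : n1 + n2 ≠ 0 := ne_of_gt hCcard
    constructor
    · rw [div_sub_div _ _ hne2 hne12, le_div_iff₀ (mul_pos hn2pos hCcard)]
      nlinarith [H1, hn1nn, hn2pos]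
    · rw [div_sub_div _ _ hne2 hne12, div_le_iff₀ (mul_pos hn2pos hCcard)]
      nlinarith [H2, hn1nn, hn2pos]

end StepBound

section ExpStep
variable {bc : Bool} {R : Finset Cell} {f : Vertex → ℤ}

lemma cls_zero {x : ℕ → Vertex} (hx0 : IsBoundaryVertexOf R (x 0)) {h : Vertex → ℤ}
    (hh : h ∈ Extensions bc R (boundaryVertexSet R) f) :
    cls bc R f x 0 h = SF bc R f := by
  ext h'
  simp only [mem_cls, mem_SF]
  constructor
  · exact fun e => e.1
  · intro e
    refine ⟨e, fun j hj => ?_⟩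
    interval_cases j
    rw [e.2 (x 0) hx0, hh.2 (x 0) hx0]

lemma gee_zero {x : ℕ → Vertex} (hx0 : IsBoundaryVertexOf R (x 0)) {v : Vertex}
    {h : Vertex → ℤ} (hh : h ∈ Extensions bc R (boundaryVertexSet R) f) :
    gee bc R f x v 0 h =
      (∑ h' ∈ SF bc R f, ((h' v : ℤ) : ℝ)) / (SF bc R f).card := by
  rw [gee, cls_zero hx0 hh]

lemma exp_step (v : Vertex) (hv : IsVertexOf R v) (m : ℕ) (x : ℕ → Vertex)
    (hxadj : ∀ i, i + 1 < m → VAdj (x i) (x (i + 1)))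
    (hxmem : ∀ i, i < m → IsVertexOf R (x i))
    (i : ℕ) (hi : i + 1 < m) (u : ℝ) (hu : u ≠ 0) :
    ∑ h ∈ SF bc R f, Real.exp (u * gee bc R f x v (i+1) h) ≤
      Real.cosh (4 * |u|) * ∑ h ∈ SF bc R f, Real.exp (u * gee bc R f x v i h) := by
  classical
  set c := 4 * |u| with hc
  have habsu : 0 < |u| := abs_pos.mpr hu
  have hcpos : 0 < c := by rw [hc]; linarith
  set X : (Vertex → ℤ) → ℝ := fun h => gee bc R f x v (i+1) h - gee bc R f x v i h with hX
  have hpt : ∀ h ∈ SF bc R f, Real.exp (u * gee bc R f x v (i+1) h) ≤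
      Real.exp (u * gee bc R f x v i h) * Real.cosh c +
      (Real.sinh c * u / c) * (Real.exp (u * gee bc R f x v i h) * X h) := by
    intro h hh
    have hb := step_bound v hv m x hxadj hxmem i hi h (mem_SF.mp hh)
    have habs : |u * X h| ≤ c := by
      rw [abs_mul, hc]
      calc |u| * |X h| ≤ |u| * 4 := mul_le_mul_of_nonneg_left (hX ▸ hb) habsu.le
        _ = 4 * |u| := by ring
    have hcb := exp_le_cosh_add hcpos habs
    have e1 : Real.exp (u * gee bc R f x v (i+1) h) =
        Real.exp (u * gee bc R f x v i h) * Real.exp (u * X h) := by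
      rw [← Real.exp_add, hX]
      ring_nf
    rw [e1]
    calc Real.exp (u * gee bc R f x v i h) * Real.exp (u * X h) ≤
        Real.exp (u * gee bc R f x v i h) *
          (Real.cosh c + (u * X h / c) * Real.sinh c) :=
          mul_le_mul_of_nonneg_left hcb (Real.exp_pos _).le
      _ = Real.exp (u * gee bc R f x v i h) * Real.cosh c +
          (Real.sinh c * u / c) * (Real.exp (u * gee bc R f x v i h) * X h) := by
          field_simp
  have hzero : ∑ h ∈ SF bc R f, Real.exp (u * gee bc R f x v i h) * X h = 0 := by
    have maps : ∀ h ∈ SF bc R f, kap x i h ∈ (SF bc R f).image (kap x i) :=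
      fun h hh => Finset.mem_image_of_mem _ hh
    rw [← Finset.sum_fiberwise_of_maps_to maps
      (fun h => Real.exp (u * gee bc R f x v i h) * X h)]
    refine Finset.sum_eq_zero (fun b hb => ?_)
    obtain ⟨h₀, hh₀, rfl⟩ := Finset.mem_image.mp hb
    have hfib : (SF bc R f).filter (fun h' => kap x i h' = kap x i h₀) = cls bc R f x i h₀ := by
      ext h'
      rw [Finset.mem_filter, cls]
      simp only [Finset.mem_filter]
    rw [hfib]
    have hconst : ∀ h' ∈ cls bc R f x i h₀,
        Real.exp (u * gee bc R f x v i h') * X h' =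
        Real.exp (u * gee bc R f x v i h₀) * X h' := by
      intro h' hh'
      rw [gee_congr hh']
    rw [Finset.sum_congr rfl hconst, ← Finset.mul_sum]
    have hXsum : ∑ h' ∈ cls bc R f x i h₀, X h' = 0 := by
      rw [hX]
      rw [Finset.sum_sub_distrib, sum_gee_succ]
      have hgconst : ∀ h' ∈ cls bc R f x i h₀,
          gee bc R f x v i h' = gee bc R f x v i h₀ := fun h' hh' => gee_congr hh'
      rw [Finset.sum_congr rfl hgconst, Finset.sum_const, nsmul_eq_mul, gee]
      have hcardne : ((cls bc R f x i h₀).card : ℝ) ≠ 0 := by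
        have : h₀ ∈ cls bc R f x i h₀ := mem_cls_self (mem_SF.mp hh₀)
        exact_mod_cast Finset.card_ne_zero_of_mem this
      field_simp
      ring
    rw [hXsum, mul_zero]
  calc ∑ h ∈ SF bc R f, Real.exp (u * gee bc R f x v (i+1) h) ≤
      ∑ h ∈ SF bc R f, (Real.exp (u * gee bc R f x v i h) * Real.cosh c +
        (Real.sinh c * u / c) * (Real.exp (u * gee bc R f x v i h) * X h)) :=
        Finset.sum_le_sum hpt
    _ = Real.cosh c * ∑ h ∈ SF bc R f, Real.exp (u * gee bc R f x v i h) := by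
        rw [Finset.sum_add_distrib, ← Finset.mul_sum, hzero, mul_zero, add_zero,
          ← Finset.sum_mul]
        ring

lemma exp_iter (v : Vertex) (hv : IsVertexOf R v) (m : ℕ) (hm : 0 < m) (x : ℕ → Vertex)
    (hx0 : IsBoundaryVertexOf R (x 0))
    (hxadj : ∀ i, i + 1 < m → VAdj (x i) (x (i + 1)))
    (hxmem : ∀ i, i < m → IsVertexOf R (x i))
    (u : ℝ) (hu : u ≠ 0) :
    ∀ i, i ≤ m - 1 →
      ∑ h ∈ SF bc R f, Real.exp (u * gee bc R f x v i h) ≤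
        ((SF bc R f).card : ℝ) *
          Real.exp (u * ((∑ h' ∈ SF bc R f, ((h' v : ℤ) : ℝ)) / (SF bc R f).card)) *
          Real.cosh (4 * |u|) ^ i := by
  intro i
  induction i with
  | zero =>
    intro _
    have : ∀ h ∈ SF bc R f, Real.exp (u * gee bc R f x v 0 h) =
        Real.exp (u * ((∑ h' ∈ SF bc R f, ((h' v : ℤ) : ℝ)) / (SF bc R f).card)) := by
      intro h hh
      rw [gee_zero hx0 (mem_SF.mp hh)]
    rw [Finset.sum_congr rfl this, Finset.sum_const, nsmul_eq_mul, pow_zero, mul_one]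
  | succ i ih =>
    intro hile
    have hi : i + 1 < m := by omega
    have hile' : i ≤ m - 1 := by omega
    calc ∑ h ∈ SF bc R f, Real.exp (u * gee bc R f x v (i+1) h) ≤
        Real.cosh (4 * |u|) * ∑ h ∈ SF bc R f, Real.exp (u * gee bc R f x v i h) :=
          exp_step v hv m x hxadj hxmem i hi u hu
      _ ≤ Real.cosh (4 * |u|) * (((SF bc R f).card : ℝ) *
            Real.exp (u * ((∑ h' ∈ SF bc R f, ((h' v : ℤ) : ℝ)) / (SF bc R f).card)) *
            Real.cosh (4 * |u|) ^ i) :=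
          mul_le_mul_of_nonneg_left (ih hile') (Real.cosh_pos _).le
      _ = ((SF bc R f).card : ℝ) *
            Real.exp (u * ((∑ h' ∈ SF bc R f, ((h' v : ℤ) : ℝ)) / (SF bc R f).card)) *
            Real.cosh (4 * |u|) ^ (i+1) := by ring

end ExpStep

section Final
variable {bc : Bool} {R : Finset Cell} {f : Vertex → ℤ}

lemma gee_last {x : ℕ → Vertex} {v : Vertex} {m : ℕ} (hxlast : x (m - 1) = v)
    {h : Vertex → ℤ} (hh : h ∈ Extensions bc R (boundaryVertexSet R) f) :
    gee bc R f x v (m - 1) h = ((h v : ℤ) : ℝ) := by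
  have hval : ∀ h' ∈ cls bc R f x (m-1) h, ((h' v : ℤ) : ℝ) = ((h v : ℤ) : ℝ) := by
    intro h' hh'
    have := (mem_cls.mp hh').2 (m-1) le_rfl
    rw [hxlast] at this
    rw [this]
  have hcardne : ((cls bc R f x (m-1) h).card : ℝ) ≠ 0 := by
    have : h ∈ cls bc R f x (m-1) h := mem_cls_self hh
    exact_mod_cast Finset.card_ne_zero_of_mem this
  rw [gee, Finset.sum_congr rfl hval, Finset.sum_const, nsmul_eq_mul]
  field_simp

lemma tail_count {S' T : Finset (Vertex → ℤ)} {φ : (Vertex → ℤ) → ℝ} {b A : ℝ}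
    (hT : T ⊆ S') (hpt : ∀ h ∈ T, b ≤ φ h)
    (hsum : ∑ h ∈ S', Real.exp (φ h) ≤ A) :
    (T.card : ℝ) * Real.exp b ≤ A := by
  calc (T.card : ℝ) * Real.exp b = ∑ _h ∈ T, Real.exp b := by
        rw [Finset.sum_const, nsmul_eq_mul]
    _ ≤ ∑ h ∈ T, Real.exp (φ h) := Finset.sum_le_sum (fun h hh => Real.exp_le_exp.mpr (hpt h hh))
    _ ≤ ∑ h ∈ S', Real.exp (φ h) :=
        Finset.sum_le_sum_of_subset_of_nonneg hT (fun h _ _ => (Real.exp_pos _).le)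
    _ ≤ A := hsum

end Final

/-- Theorem 21 (Azuma-type concentration for heights). -/
theorem statement13 (bc : Bool) (R : Finset Cell) (hR : IsSimplyConnectedRegion R)
    (f : Vertex → ℤ) (hf : IsPartialHeightFn bc R (boundaryVertexSet R) f)
    (hne : (Extensions bc R (boundaryVertexSet R) f).Nonempty)
    (v : Vertex) (hv : IsVertexOf R v) (hvint : ¬IsBoundaryVertexOf R v)
    (m : ℕ) (hm : 0 < m) (x : ℕ → Vertex)
    (hx0 : IsBoundaryVertexOf R (x 0)) (hxlast : x (m - 1) = v)
    (hxadj : ∀ i, i + 1 < m → VAdj (x i) (x (i + 1)))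
    (hxmem : ∀ i, i < m → IsVertexOf R (x i)) :
    ∀ c : ℝ, 0 < c →
      probOn (Extensions bc R (boundaryVertexSet R) f)
          {h | c * Real.sqrt m <
            |((h v : ℤ) : ℝ) - heightExp (Extensions bc R (boundaryVertexSet R) f) v|} <
        2 * Real.exp (-c ^ 2 / 32) := by
  intro c hc
  classical
  have hSF : ((SF bc R f : Finset (Vertex → ℤ)) : Set (Vertex → ℤ)) =
      Extensions bc R (boundaryVertexSet R) f := Set.Finite.coe_toFinset _
  set S' := SF bc R f with hS'
  set n := S'.card with hn
  obtain ⟨h₀, hh₀⟩ := hne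
  have hnpos : 0 < n := Finset.card_pos.mpr ⟨h₀, mem_SF.mpr hh₀⟩
  have hnR : (0:ℝ) < n := by exact_mod_cast hnpos
  have hm2 : 2 ≤ m := by
    rcases Nat.lt_or_ge m 2 with h2 | h2
    · exfalso
      have hm1 : m = 1 := by omega
      apply hvint
      rw [← hxlast, hm1]
      exact hx0
    · exact h2
  set Eavg := (∑ h' ∈ S', ((h' v : ℤ) : ℝ)) / (n : ℝ) with hE
  have hEeq : heightExp (Extensions bc R (boundaryVertexSet R) f) v = Eavg := by
    rw [heightExp, ← hSF, Set.ncard_coe_finset, finsum_mem_coe_finset]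
  set lam := c * Real.sqrt m with hlam
  have hmpos : (0:ℝ) < m := by exact_mod_cast hm
  have hsqrt : 0 < Real.sqrt m := Real.sqrt_pos.mpr hmpos
  have hlampos : 0 < lam := mul_pos hc hsqrt
  have hm1R : (0:ℝ) < (m:ℝ) - 1 := by
    have : (2:ℝ) ≤ m := by exact_mod_cast hm2
    linarith
  set t := lam / (16 * ((m:ℝ) - 1)) with ht
  have htpos : 0 < t := div_pos hlampos (by linarith)
  have hm1cast : ((m - 1 : ℕ) : ℝ) = (m:ℝ) - 1 := by
    have h1 : 1 ≤ m := by omega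
    push_cast [h1]
    ring
  have hcosh : Real.cosh (4 * t) ≤ Real.exp (8 * t^2) := by
    calc Real.cosh (4*t) ≤ Real.exp ((4*t)^2/2) := Real.cosh_le_exp_half_sq (4*t)
      _ = Real.exp (8*t^2) := by ring_nf
  have hcoshpow : Real.cosh (4*t) ^ (m-1) ≤ Real.exp (8 * t^2 * ((m:ℝ)-1)) := by
    calc Real.cosh (4*t) ^ (m-1) ≤ Real.exp (8*t^2) ^ (m-1) :=
        pow_le_pow_left₀ (Real.cosh_pos _).le hcosh _
      _ = Real.exp (8*t^2 * ((m:ℝ)-1)) := by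
          rw [← Real.exp_nat_mul, hm1cast]
          ring_nf
  have hexpo : 8 * t^2 * ((m:ℝ)-1) - t * lam = - lam^2 / (32 * ((m:ℝ)-1)) := by
    rw [ht]
    field_simp
    ring
  have hlamsq : lam^2 = c^2 * m := by
    rw [hlam, mul_pow, Real.sq_sqrt hmpos.le]
  have hstrict : - lam^2/(32*((m:ℝ)-1)) < - c^2/32 := by
    rw [hlamsq]
    have hcsq : 0 < c^2 := pow_pos hc 2
    have h1 : c^2 / 32 < c^2 * m / (32 * ((m:ℝ)-1)) := by
      rw [div_lt_div_iff₀ (by norm_num) (by positivity)]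
      nlinarith
    rw [neg_div, neg_div, neg_lt_neg_iff]
    exact h1
  -- upper tail
  set U1 := S'.filter (fun h => lam < ((h v : ℤ) : ℝ) - Eavg) with hU1
  have hU1bound : (U1.card : ℝ) ≤ n * Real.exp (- lam^2/(32*((m:ℝ)-1))) := by
    have hiter := exp_iter (bc := bc) (R := R) (f := f) v hv m hm x hx0 hxadj hxmem
      t (ne_of_gt htpos) (m-1) le_rfl
    rw [abs_of_pos htpos] at hiter
    have hiter' : ∑ h ∈ S', Real.exp (t * ((h v : ℤ):ℝ)) ≤
        (n : ℝ) * Real.exp (t * Eavg) * Real.cosh (4*t)^(m-1) := by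
      calc ∑ h ∈ S', Real.exp (t * ((h v:ℤ):ℝ))
          = ∑ h ∈ S', Real.exp (t * gee bc R f x v (m-1) h) :=
            Finset.sum_congr rfl (fun h hh => by rw [gee_last hxlast (mem_SF.mp hh)])
        _ ≤ (n : ℝ) * Real.exp (t * Eavg) * Real.cosh (4*t)^(m-1) := hiter
    have hpt : ∀ h ∈ U1, t * (Eavg + lam) ≤ t * ((h v : ℤ):ℝ) := by
      intro h hh
      have := (Finset.mem_filter.mp hh).2
      have hzge : Eavg + lam ≤ ((h v : ℤ):ℝ) := by linarith
      exact mul_le_mul_of_nonneg_left hzge htpos.le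
    have htail := tail_count (Finset.filter_subset _ _) hpt hiter'
    have hstep2 : (U1.card : ℝ) * Real.exp (t * (Eavg + lam)) ≤
        (n : ℝ) * Real.exp (t * Eavg) * Real.exp (8*t^2*((m:ℝ)-1)) := by
      calc (U1.card : ℝ) * Real.exp (t * (Eavg + lam)) ≤
          (n : ℝ) * Real.exp (t * Eavg) * Real.cosh (4*t)^(m-1) := htail
        _ ≤ (n : ℝ) * Real.exp (t * Eavg) * Real.exp (8*t^2*((m:ℝ)-1)) := by
            apply mul_le_mul_of_nonneg_left hcoshpow (by positivity)
    rw [← le_div_iff₀ (Real.exp_pos _)] at hstep2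
    calc (U1.card : ℝ) ≤
        (n : ℝ) * Real.exp (t * Eavg) * Real.exp (8*t^2*((m:ℝ)-1)) / Real.exp (t * (Eavg + lam)) :=
          hstep2
      _ = (n : ℝ) * Real.exp (t * Eavg + 8*t^2*((m:ℝ)-1) - t * (Eavg + lam)) := by
          rw [mul_assoc, ← Real.exp_add, mul_div_assoc, ← Real.exp_sub]
      _ = (n : ℝ) * Real.exp (- lam^2/(32*((m:ℝ)-1))) := by
          congr 1
          rw [← hexpo]
          ring_nf
  -- lower tail
  set U2 := S'.filter (fun h => lam < Eavg - ((h v : ℤ) : ℝ)) with hU2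
  have hU2bound : (U2.card : ℝ) ≤ n * Real.exp (- lam^2/(32*((m:ℝ)-1))) := by
    have hiter := exp_iter (bc := bc) (R := R) (f := f) v hv m hm x hx0 hxadj hxmem
      (-t) (by intro hcon; exact (ne_of_gt htpos) (by linarith [neg_eq_zero.mp hcon])) (m-1) le_rfl
    rw [abs_neg, abs_of_pos htpos] at hiter
    have hiter' : ∑ h ∈ S', Real.exp ((-t) * ((h v : ℤ):ℝ)) ≤
        (n : ℝ) * Real.exp ((-t) * Eavg) * Real.cosh (4*t)^(m-1) := by
      calc ∑ h ∈ S', Real.exp ((-t) * ((h v:ℤ):ℝ))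
          = ∑ h ∈ S', Real.exp ((-t) * gee bc R f x v (m-1) h) :=
            Finset.sum_congr rfl (fun h hh => by rw [gee_last hxlast (mem_SF.mp hh)])
        _ ≤ (n : ℝ) * Real.exp ((-t) * Eavg) * Real.cosh (4*t)^(m-1) := hiter
    have hpt : ∀ h ∈ U2, (-t) * (Eavg - lam) ≤ (-t) * ((h v : ℤ):ℝ) := by
      intro h hh
      have := (Finset.mem_filter.mp hh).2
      have hzle : ((h v : ℤ):ℝ) ≤ Eavg - lam := by linarith
      exact mul_le_mul_of_nonpos_left hzle (by linarith)
    have htail := tail_count (Finset.filter_subset _ _) hpt hiter'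
    have hstep2 : (U2.card : ℝ) * Real.exp ((-t) * (Eavg - lam)) ≤
        (n : ℝ) * Real.exp ((-t) * Eavg) * Real.exp (8*t^2*((m:ℝ)-1)) := by
      calc (U2.card : ℝ) * Real.exp ((-t) * (Eavg - lam)) ≤
          (n : ℝ) * Real.exp ((-t) * Eavg) * Real.cosh (4*t)^(m-1) := htail
        _ ≤ (n : ℝ) * Real.exp ((-t) * Eavg) * Real.exp (8*t^2*((m:ℝ)-1)) := by
            apply mul_le_mul_of_nonneg_left hcoshpow (by positivity)
    rw [← le_div_iff₀ (Real.exp_pos _)] at hstep2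
    calc (U2.card : ℝ) ≤
        (n : ℝ) * Real.exp ((-t) * Eavg) * Real.exp (8*t^2*((m:ℝ)-1)) /
          Real.exp ((-t) * (Eavg - lam)) := hstep2
      _ = (n : ℝ) * Real.exp ((-t) * Eavg + 8*t^2*((m:ℝ)-1) - (-t) * (Eavg - lam)) := by
          rw [mul_assoc, ← Real.exp_add, mul_div_assoc, ← Real.exp_sub]
      _ = (n : ℝ) * Real.exp (- lam^2/(32*((m:ℝ)-1))) := by
          congr 1
          rw [← hexpo]
          ring_nf
  -- the event
  set T := S'.filter (fun h => lam < |((h v : ℤ) : ℝ) - Eavg|) with hT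
  have hEventEq : Extensions bc R (boundaryVertexSet R) f ∩
      {h | c * Real.sqrt m <
        |((h v : ℤ) : ℝ) - heightExp (Extensions bc R (boundaryVertexSet R) f) v|} =
      (T : Set (Vertex → ℤ)) := by
    ext h
    simp only [Set.mem_inter_iff, Set.mem_setOf_eq, hT, Finset.coe_filter, hEeq, ← hlam]
    rw [← hSF]
    simp only [Finset.mem_coe]
  have hTsub : T ⊆ U1 ∪ U2 := by
    intro h hh
    obtain ⟨hmem, habs⟩ := Finset.mem_filter.mp hh
    rcases lt_abs.mp habs with h1 | h1
    · exact Finset.mem_union_left _ (Finset.mem_filter.mpr ⟨hmem, h1⟩)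
    · refine Finset.mem_union_right _ (Finset.mem_filter.mpr ⟨hmem, by linarith⟩)
  have hTcard : (T.card : ℝ) < 2 * Real.exp (-c^2/32) * n := by
    have hcard1 : T.card ≤ U1.card + U2.card :=
      le_trans (Finset.card_le_card hTsub) (Finset.card_union_le _ _)
    have hexpStrict : Real.exp (- lam^2/(32*((m:ℝ)-1))) < Real.exp (-c^2/32) :=
      Real.exp_lt_exp.mpr hstrict
    have hsum2 : (T.card : ℝ) ≤ (U1.card : ℝ) + (U2.card : ℝ) := by exact_mod_cast hcard1
    have h2n : (0:ℝ) < 2 * n := by linarith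
    calc (T.card : ℝ) ≤ (U1.card : ℝ) + (U2.card : ℝ) := hsum2
      _ ≤ 2 * ((n:ℝ) * Real.exp (- lam^2/(32*((m:ℝ)-1)))) := by linarith
      _ = 2 * (n:ℝ) * Real.exp (- lam^2/(32*((m:ℝ)-1))) := by ring
      _ < 2 * (n:ℝ) * Real.exp (-c^2/32) := mul_lt_mul_of_pos_left hexpStrict h2n
      _ = 2 * Real.exp (-c^2/32) * n := by ring
  rw [probOn, hEventEq, Set.ncard_coe_finset, ← hSF, Set.ncard_coe_finset, ← hn,
    div_lt_iff₀ hnR]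
  exact hTcard
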